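/- arXiv:1411.7026 — 6 statements merged into one kernel-verified Lean document; each statement's English description precedes it below -/
import Mathlib

section
/- If L is a right Leibniz algebra над a field K with product [.,.], then L becomes a Leibniz triple system under the ternary product {x,y,z} := [[x,y],z]; that is, this trilinear product satisfies the two defining identities (L1) and (L2) of a Leibniz triple system. -/
/-!
The right Leibniz identity, read as the rewrite rule `y (z x) = (y z) x - (y x) z`, turns every
product whose right factor is itself a product into left-normed products. Applied twice to the
inner triple product on the left of (L1) or (L2), it produces exactly the four left-normed terms
on the right.
-/

section

variable {K L : Type*} [CommRing K] [AddCommGroup L] [Module K L]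

def IsRightLeibniz (b : L →ₗ[K] L →ₗ[K] L) : Prop :=
  ∀ x y z : L, b (b y z) x = b (b y x) z + b y (b z x)

def IsLeibnizTripleProduct (t : L → L → L → L) : Prop :=
  (∀ a b c d e : L,
    t a (t b c d) e = t (t a b c) d e - t (t a c b) d e - t (t a d b) c e + t (t a d c) b e) ∧
  (∀ a b c d e : L,
    t a b (t c d e) = t (t a b c) d e - t (t a b d) c e - t (t a b e) c d + t (t a b e) d c)

namespace IsRightLeibniz

variable {b : L →ₗ[K] L →ₗ[K] L}

theorem apply_apply_right (h : IsRightLeibniz b) (x y z : L) :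
    b y (b z x) = b (b y z) x - b (b y x) z := by
  rw [h x y z]
  abel

theorem isLeibnizTripleProduct (h : IsRightLeibniz b) :
    IsLeibnizTripleProduct fun x y z => b (b x y) z := by
  constructor <;> intro a b' c d e <;>
    simp only [h.apply_apply_right, map_sub, LinearMap.sub_apply] <;> abel

end IsRightLeibniz

end

/-- A right Leibniz algebra becomes a Leibniz triple system under {x,y,z} := [[x,y],z]. -/
theorem leibnizAlgebra_gives_leibnizTripleSystem
    {K L : Type*} [Field K] [AddCommGroup L] [Module K L]
    (b : L →ₗ[K] L →ₗ[K] L)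
    (hLeib : ∀ x y z : L, b (b y z) x = b (b y x) z + b y (b z x)) :
    (∀ a b' c d e : L,
      b (b a (b (b b' c) d)) e
        = b (b (b (b a b') c) d) e - b (b (b (b a c) b') d) e
          - b (b (b (b a d) b') c) e + b (b (b (b a d) c) b') e) ∧
    (∀ a b' c d e : L,
      b (b a b') (b (b c d) e)
        = b (b (b (b a b') c) d) e - b (b (b (b a b') d) c) e
          - b (b (b (b a b') e) c) d + b (b (b (b a b') e) d) c) :=
  IsRightLeibniz.isLeibnizTripleProduct hLeib
end

section
/- Let T be a Leibniz triple system over a field K. For all a,b,c,x,y in T, writing w = {a,b,c} − {a,c,b} + {b,c,a}, one has {x,y,w} = 0 and {x,w,y} = 0. -/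
section LeibnizTriple

variable {R T : Type*} [CommRing R] [AddCommGroup T] [Module R T]
  (t : T →ₗ[R] T →ₗ[R] T →ₗ[R] T)

/- Expanding the three summands of `{a,b,c} - {a,c,b} + {b,c,a}` by (L2), resp. (L1), gives
twelve terms of the form `{{x,y,_},_,_}`, resp. `{{x,_,_},_,y}`, which cancel in pairs. -/
theorem leibnizTriple_annihilates_right
    (hL2 : ∀ a b c d e : T,
      t a b (t c d e)
        = t (t a b c) d e - t (t a b d) c e - t (t a b e) c d + t (t a b e) d c)
    (a b c x y : T) :
    t x y (t a b c - t a c b + t b c a) = 0 := by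
  simp only [map_sub, map_add, hL2 x y a b c, hL2 x y a c b, hL2 x y b c a]
  abel

theorem leibnizTriple_annihilates_middle
    (hL1 : ∀ a b c d e : T,
      t a (t b c d) e
        = t (t a b c) d e - t (t a c b) d e - t (t a d b) c e + t (t a d c) b e)
    (a b c x y : T) :
    t x (t a b c - t a c b + t b c a) y = 0 := by
  simp only [map_sub, map_add, LinearMap.sub_apply, LinearMap.add_apply,
    hL1 x a b c y, hL1 x a c b y, hL1 x b c a y]
  abel

end LeibnizTriple

/-- In a Leibniz triple system, with w = {a,b,c} − {a,c,b} + {b,c,a}, one has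
{x,y,w} = 0 and {x,w,y} = 0. -/
theorem leibnizTriple_generator_annihilated
    {K T : Type*} [Field K] [AddCommGroup T] [Module K T]
    (t : T →ₗ[K] T →ₗ[K] T →ₗ[K] T)
    (hL1 : ∀ a b c d e : T,
      t a (t b c d) e
        = t (t a b c) d e - t (t a c b) d e - t (t a d b) c e + t (t a d c) b e)
    (hL2 : ∀ a b c d e : T,
      t a b (t c d e)
        = t (t a b c) d e - t (t a b d) c e - t (t a b e) c d + t (t a b e) d c) :
    ∀ a b c x y : T,
      t x y (t a b c - t a c b + t b c a) = 0 ∧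
      t x (t a b c - t a c b + t b c a) y = 0 :=
  fun a b c x y =>
    ⟨leibnizTriple_annihilates_right t hL2 a b c x y,
      leibnizTriple_annihilates_middle t hL1 a b c x y⟩
end

section
/- Let T be a Leibniz triple system over a field K and let J be the smallest ideal of T containing all elements of the form {a,b,c} − {a,c,b} + {b,c,a} with a,b,c in T. Then J satisfies {T,T,J} = 0 and {T,J,T} = 0, i.e., {x,y,j} = 0 and {x,j,y} = 0 for all x,y in T and j in J. -/
/-!
The elements `j` with `{T,T,j} = 0` and `{T,j,T} = 0` form a submodule. Identities (L1) and
(L2) expand `{x,{j,y,z},w}` and `{x,w,{j,y,z}}` into terms in which `j` sits in the second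
or third slot, so this submodule is an ideal; and they show that the three expansions of
`{a,b,c} − {a,c,b} + {b,c,a}` in the last two slots cancel, so it contains the generators of
`J`. Minimality of `J` finishes the proof.
-/

namespace LeibnizTriple

variable {K T : Type*} [CommRing K] [AddCommGroup T] [Module K T]

def annihilator (t : T →ₗ[K] T →ₗ[K] T →ₗ[K] T) : Submodule K T where
  carrier := {j | ∀ x y : T, t x y j = 0 ∧ t x j y = 0}
  add_mem' ha hb x y := by simp [(ha x y).1, (hb x y).1, (ha x y).2, (hb x y).2]
  zero_mem' x y := by simp
  smul_mem' c j hj x y := by simp [(hj x y).1, (hj x y).2]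

theorem mem_annihilator {t : T →ₗ[K] T →ₗ[K] T →ₗ[K] T} {j : T} :
    j ∈ annihilator t ↔ ∀ x y : T, t x y j = 0 ∧ t x j y = 0 :=
  Iff.rfl

variable {t : T →ₗ[K] T →ₗ[K] T →ₗ[K] T}
  (hL1 : ∀ a b c d e : T,
    t a (t b c d) e = t (t a b c) d e - t (t a c b) d e - t (t a d b) c e + t (t a d c) b e)
  (hL2 : ∀ a b c d e : T,
    t a b (t c d e) = t (t a b c) d e - t (t a b d) c e - t (t a b e) c d + t (t a b e) d c)
include hL1 hL2

theorem triple_mem_annihilator_of_left {j : T} (hj : j ∈ annihilator t) (y z : T) :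
    t j y z ∈ annihilator t := by
  intro x w
  constructor
  · rw [hL2, (hj x w).1, (hj (t x w y) z).2, (hj (t x w z) y).2, (hj (t x w z) y).1]
    simp
  · rw [hL1, (hj x y).2, (hj x y).1, (hj x z).1, (hj (t x z y) w).2]
    simp

theorem isIdeal_annihilator :
    ∀ j ∈ annihilator t, ∀ y z : T,
      t j y z ∈ annihilator t ∧ t y j z ∈ annihilator t ∧ t y z j ∈ annihilator t := by
  intro j hj y z
  refine ⟨triple_mem_annihilator_of_left hL1 hL2 hj y z, fun x w => ?_, fun x w => ?_⟩
  · simp [(hj y z).2]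
  · simp [(hj y z).1]

theorem jacobiator_mem_annihilator (a b c : T) :
    t a b c - t a c b + t b c a ∈ annihilator t := by
  intro x y
  constructor
  · simp only [map_sub, map_add]
    rw [hL2 x y a b c, hL2 x y a c b, hL2 x y b c a]
    abel
  · simp only [map_sub, map_add, LinearMap.sub_apply, LinearMap.add_apply]
    rw [hL1 x a b c y, hL1 x a c b y, hL1 x b c a y]
    abel

end LeibnizTriple

theorem leibnizTriple_ideal_J_annihilated_general
    {K T : Type*} [Field K] [AddCommGroup T] [Module K T]
    (t : T →ₗ[K] T →ₗ[K] T →ₗ[K] T)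
    (hL1 : ∀ a b c d e : T,
      t a (t b c d) e
        = t (t a b c) d e - t (t a c b) d e - t (t a d b) c e + t (t a d c) b e)
    (hL2 : ∀ a b c d e : T,
      t a b (t c d e)
        = t (t a b c) d e - t (t a b d) c e - t (t a b e) c d + t (t a b e) d c)
    (J : Submodule K T)
    (hJmin : ∀ I : Submodule K T,
      (∀ x ∈ I, ∀ y z : T, t x y z ∈ I ∧ t y x z ∈ I ∧ t y z x ∈ I) →
      (∀ a b c : T, t a b c - t a c b + t b c a ∈ I) → J ≤ I) :
    ∀ x y : T, ∀ j ∈ J, t x y j = 0 ∧ t x j y = 0 :=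
  fun _ _ _ hj =>
    hJmin _ (LeibnizTriple.isIdeal_annihilator hL1 hL2)
      (LeibnizTriple.jacobiator_mem_annihilator hL1 hL2) hj _ _

/-- For the smallest ideal J of a Leibniz triple system containing all elements
{a,b,c} − {a,c,b} + {b,c,a}, one has {T,T,J} = 0 and {T,J,T} = 0. -/
theorem leibnizTriple_ideal_J_annihilated
    {K T : Type*} [Field K] [AddCommGroup T] [Module K T]
    (t : T →ₗ[K] T →ₗ[K] T →ₗ[K] T)
    (hL1 : ∀ a b c d e : T,
      t a (t b c d) e
        = t (t a b c) d e - t (t a c b) d e - t (t a d b) c e + t (t a d c) b e)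
    (hL2 : ∀ a b c d e : T,
      t a b (t c d e)
        = t (t a b c) d e - t (t a b d) c e - t (t a b e) c d + t (t a b e) d c)
    (J : Submodule K T)
    (hJideal : ∀ x ∈ J, ∀ y z : T, t x y z ∈ J ∧ t y x z ∈ J ∧ t y z x ∈ J)
    (hJgen : ∀ a b c : T, t a b c - t a c b + t b c a ∈ J)
    (hJmin : ∀ I : Submodule K T,
      (∀ x ∈ I, ∀ y z : T, t x y z ∈ I ∧ t y x z ∈ I ∧ t y z x ∈ I) →
      (∀ a b c : T, t a b c - t a c b + t b c a ∈ I) → J ≤ I) :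
    ∀ x y : T, ∀ j ∈ J, t x y j = 0 ∧ t x j y = 0 :=
  leibnizTriple_ideal_J_annihilated_general t hL1 hL2 J hJmin
end

section
/- In any Leibniz triple system T over a field K, the identity {{c,d,e},b,a} − {{c,d,e},a,b} − {{c,b,a},d,e} + {{c,a,b},d,e} − {c,{a,b,d},e} − {c,d,{a,b,e}} = 0 holds for all a,b,c,d,e in T. -/
/-- In any Leibniz triple system, the identity
{{c,d,e},b,a} − {{c,d,e},a,b} − {{c,b,a},d,e} + {{c,a,b},d,e} − {c,{a,b,d},e} − {c,d,{a,b,e}} = 0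
holds. -/
theorem leibnizTriple_extra_identity
    {K T : Type*} [Field K] [AddCommGroup T] [Module K T]
    (t : T →ₗ[K] T →ₗ[K] T →ₗ[K] T)
    (hL1 : ∀ a b c d e : T,
      t a (t b c d) e
        = t (t a b c) d e - t (t a c b) d e - t (t a d b) c e + t (t a d c) b e)
    (hL2 : ∀ a b c d e : T,
      t a b (t c d e)
        = t (t a b c) d e - t (t a b d) c e - t (t a b e) c d + t (t a b e) d c) :
    ∀ a b c d e : T,
      t (t c d e) b a - t (t c d e) a b - t (t c b a) d e + t (t c a b) d e
        - t c (t a b d) e - t c d (t a b e) = 0 := by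
  intro a b c d e
  -- In the two expansions the terms {{c,d,a},b,e} and {{c,d,b},a,e} cancel each other.
  rw [hL1 c a b d e, hL2 c d a b e]
  abel
end

section
/- Let K be a field, V a K-vector space, and Λ¹, Λ⁰ subsets of V \ {0} that are both symmetric. Then the relation ∼ on Λ¹ defined by α ∼ β if and only if α and β are connected is an equivalence relation on Λ¹. -/
/-- A connection from `α` to `β` relative to the root sets `Λ1` and `Λ0`:
a sequence `f 0, f 1, …, f (2n)` (representing `α₁, …, α_{2n+1}`) of elements of
`Λ1 ∪ {0}` starting at `α`, whose odd partial sums lie in `Λ1`, whose even partial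
sums lie in `Λ0`, and whose total sum is `β` or `-β`. -/
def Connected {V : Type*} [AddCommGroup V] (Λ1 Λ0 : Set V) (α β : V) : Prop :=
  ∃ (n : ℕ) (f : ℕ → V),
    f 0 = α ∧
    (∀ i < 2 * n + 1, f i ∈ Λ1 ∪ {0}) ∧
    (∀ i ≤ n, (∑ j ∈ Finset.range (2 * i + 1), f j) ∈ Λ1) ∧
    (∀ i, 1 ≤ i → i ≤ n → (∑ j ∈ Finset.range (2 * i), f j) ∈ Λ0) ∧
    ((∑ j ∈ Finset.range (2 * n + 1), f j) = β ∨
      (∑ j ∈ Finset.range (2 * n + 1), f j) = -β)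

/-!
A connection `α₁, …, α_{2n+1}` is the same thing as the walk `0, α₁, α₁ + α₂, …` of its
partial sums: the walk starts at `0`, moves by steps in `Λ1 ∪ {0}`, and visits `Λ1` at odd
and `Λ0` at even times. Walks can be negated (by symmetry of `Λ1` and `Λ0`), reversed (read
backwards from the endpoint, which lies in `Λ1`, the steps are negated and the parity of each
position is preserved) and concatenated; this gives symmetry and transitivity, the sign
ambiguity of the endpoint being absorbed by negating a walk.
-/

section

variable {V : Type*} [AddCommGroup V] {Λ1 Λ0 : Set V}

structure IsConnectionWalk (Λ1 Λ0 : Set V) (n : ℕ) (s : ℕ → V) : Prop where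
  zero : s 0 = 0
  step : ∀ i < 2 * n + 1, s (i + 1) - s i ∈ Λ1 ∪ {0}
  odd : ∀ i ≤ n, s (2 * i + 1) ∈ Λ1
  even : ∀ i, 1 ≤ i → i ≤ n → s (2 * i) ∈ Λ0

theorem connected_iff_exists_walk {α β : V} :
    Connected Λ1 Λ0 α β ↔ ∃ (n : ℕ) (s : ℕ → V), IsConnectionWalk Λ1 Λ0 n s ∧ s 1 = α ∧
      (s (2 * n + 1) = β ∨ s (2 * n + 1) = -β) := by
  constructor
  · rintro ⟨n, f, hf0, hstep, hodd, heven, hend⟩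
    refine ⟨n, fun m => ∑ j ∈ Finset.range m, f j,
      ⟨by simp, fun i hi => ?_, hodd, heven⟩, by simp [hf0], hend⟩
    simpa [Finset.sum_range_succ] using hstep i hi
  · rintro ⟨n, s, hs, hs1, hend⟩
    have hsum : ∀ m, ∑ j ∈ Finset.range m, (s (j + 1) - s j) = s m := fun m => by
      rw [Finset.sum_range_sub, hs.zero, sub_zero]
    refine ⟨n, fun i => s (i + 1) - s i, by simp [hs.zero, hs1], hs.step, ?_, ?_, ?_⟩
    · simpa only [hsum] using hs.odd
    · simpa only [hsum] using hs.even
    · simpa only [hsum] using hend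

theorem neg_mem_union_zero (hΛ1 : ∀ α ∈ Λ1, -α ∈ Λ1) {x : V} (hx : x ∈ Λ1 ∪ {0}) :
    -x ∈ Λ1 ∪ {0} := by
  rcases hx with hx | rfl
  exacts [Or.inl (hΛ1 x hx), by simp]

namespace IsConnectionWalk

variable {n m : ℕ} {s t : ℕ → V}

theorem neg (hΛ1 : ∀ α ∈ Λ1, -α ∈ Λ1) (hΛ0 : ∀ α ∈ Λ0, -α ∈ Λ0)
    (hs : IsConnectionWalk Λ1 Λ0 n s) : IsConnectionWalk Λ1 Λ0 n (-s) where
  zero := by simp [hs.zero]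
  step i hi := by
    rw [Pi.neg_apply, Pi.neg_apply, neg_sub_neg, ← neg_sub]
    exact neg_mem_union_zero hΛ1 (hs.step i hi)
  odd i hi := hΛ1 _ (hs.odd i hi)
  even i hi₁ hi₂ := hΛ0 _ (hs.even i hi₁ hi₂)

theorem exists_reverse (hΛ1 : ∀ α ∈ Λ1, -α ∈ Λ1) (hs : IsConnectionWalk Λ1 Λ0 n s) :
    ∃ t, IsConnectionWalk Λ1 Λ0 n t ∧ t 1 = s (2 * n + 1) ∧ t (2 * n + 1) = s 1 := by
  set t : ℕ → V := fun k => if k = 0 then 0 else s (2 * n + 2 - k)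
  refine ⟨t, ⟨by simp [t], fun i hi => ?_, fun i hi => ?_, fun i hi₁ hi₂ => ?_⟩, by simp [t],
    by simp [t, show 2 * n + 2 - (2 * n + 1) = 1 by omega]⟩
  · rcases Nat.eq_zero_or_pos i with rfl | hi₀
    · simpa [t] using Or.inr (hs.odd n le_rfl)
    · have h_succ : t (i + 1) = s (2 * n + 1 - i) := by
        simp [t, show 2 * n + 2 - (i + 1) = 2 * n + 1 - i by omega]
      have h_self : t i = s (2 * n + 1 - i + 1) := by
        simp [t, Nat.pos_iff_ne_zero.mp hi₀, show 2 * n + 2 - i = 2 * n + 1 - i + 1 by omega]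
      rw [h_succ, h_self, ← neg_sub]
      exact neg_mem_union_zero hΛ1 (hs.step _ (by omega))
  · simpa [t, show 2 * n + 2 - (2 * i + 1) = 2 * (n - i) + 1 by omega]
      using hs.odd (n - i) (by omega)
  · simpa [t, show 2 * i ≠ 0 by omega, show 2 * n + 2 - 2 * i = 2 * (n + 1 - i) by omega]
      using hs.even (n + 1 - i) (by omega) (by omega)

theorem exists_append (hs : IsConnectionWalk Λ1 Λ0 n s) (ht : IsConnectionWalk Λ1 Λ0 m t)
    (hst : t 1 = s (2 * n + 1)) :
    ∃ u, IsConnectionWalk Λ1 Λ0 (n + m) u ∧ u 1 = s 1 ∧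
      u (2 * (n + m) + 1) = t (2 * m + 1) := by
  set u : ℕ → V := fun k => if k ≤ 2 * n + 1 then s k else t (k - 2 * n)
  have hu_left : ∀ k ≤ 2 * n + 1, u k = s k := fun k hk => if_pos hk
  have hu_right : ∀ k ≥ 2 * n + 1, u k = t (k - 2 * n) := by
    intro k hk
    rcases hk.eq_or_lt with rfl | hk
    · simp [u, hst]
    · exact if_neg (by omega)
  refine ⟨u, ⟨by simp [u, hs.zero], fun i hi => ?_, fun i hi => ?_, fun i hi₁ hi₂ => ?_⟩,
    hu_left 1 (by omega), ?_⟩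
  · by_cases hin : i < 2 * n + 1
    · rw [hu_left _ hin, hu_left _ hin.le]
      exact hs.step i hin
    · rw [hu_right _ (by omega), hu_right _ (by omega),
        show i + 1 - 2 * n = i - 2 * n + 1 by omega]
      exact ht.step _ (by omega)
  · by_cases hin : i ≤ n
    · rw [hu_left _ (by omega)]
      exact hs.odd i hin
    · rw [hu_right _ (by omega), show 2 * i + 1 - 2 * n = 2 * (i - n) + 1 by omega]
      exact ht.odd _ (by omega)
  · by_cases hin : i ≤ n
    · rw [hu_left _ (by omega)]
      exact hs.even i hi₁ hin
    · rw [hu_right _ (by omega), show 2 * i - 2 * n = 2 * (i - n) by omega]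
      exact ht.even _ (by omega) (by omega)
  · rw [hu_right _ (by omega)]
    congr 1
    omega

end IsConnectionWalk

namespace Connected

variable {α β γ : V}

theorem refl (hα : α ∈ Λ1) : Connected Λ1 Λ0 α α :=
  ⟨0, fun _ => α, rfl, fun _ _ => Or.inl hα, fun i hi => by simpa [Nat.le_zero.mp hi] using hα,
    fun _ h₁ h₂ => by omega, Or.inl (by simp)⟩

theorem neg_left (hΛ1 : ∀ α ∈ Λ1, -α ∈ Λ1) (hΛ0 : ∀ α ∈ Λ0, -α ∈ Λ0)
    (h : Connected Λ1 Λ0 α β) : Connected Λ1 Λ0 (-α) β := by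
  obtain ⟨n, s, hs, rfl, hend⟩ := connected_iff_exists_walk.mp h
  exact connected_iff_exists_walk.mpr
    ⟨n, -s, hs.neg hΛ1 hΛ0, rfl, by rcases hend with h | h <;> simp [h]⟩

theorem symm (hΛ1 : ∀ α ∈ Λ1, -α ∈ Λ1) (hΛ0 : ∀ α ∈ Λ0, -α ∈ Λ0)
    (h : Connected Λ1 Λ0 α β) : Connected Λ1 Λ0 β α := by
  obtain ⟨n, s, hs, rfl, hend⟩ := connected_iff_exists_walk.mp h
  obtain ⟨t, ht, ht1, htend⟩ := hs.exists_reverse hΛ1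
  have hrev : Connected Λ1 Λ0 (s (2 * n + 1)) (s 1) :=
    connected_iff_exists_walk.mpr ⟨n, t, ht, ht1, Or.inl htend⟩
  rcases hend with hend | hend
  · rwa [hend] at hrev
  · simpa [hend] using hrev.neg_left hΛ1 hΛ0

theorem trans (hΛ1 : ∀ α ∈ Λ1, -α ∈ Λ1) (hΛ0 : ∀ α ∈ Λ0, -α ∈ Λ0)
    (hαβ : Connected Λ1 Λ0 α β) (hβγ : Connected Λ1 Λ0 β γ) : Connected Λ1 Λ0 α γ := by
  obtain ⟨n, s, hs, rfl, hend⟩ := connected_iff_exists_walk.mp hαβ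
  have hβγ' : Connected Λ1 Λ0 (s (2 * n + 1)) γ := by
    rcases hend with hend | hend <;> rw [hend]
    exacts [hβγ, hβγ.neg_left hΛ1 hΛ0]
  obtain ⟨m, t, ht, ht1, htend⟩ := connected_iff_exists_walk.mp hβγ'
  obtain ⟨u, hu, hu1, huend⟩ := hs.exists_append ht ht1
  exact connected_iff_exists_walk.mpr ⟨n + m, u, hu, hu1, huend ▸ htend⟩

end Connected

end

theorem connected_equivalence_general
    {V : Type*} [AddCommGroup V]
    (Λ1 Λ0 : Set V)
    (hΛ1sym : ∀ α ∈ Λ1, -α ∈ Λ1) (hΛ0sym : ∀ α ∈ Λ0, -α ∈ Λ0) :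
    (∀ α ∈ Λ1, Connected Λ1 Λ0 α α) ∧
    (∀ α ∈ Λ1, ∀ β ∈ Λ1, Connected Λ1 Λ0 α β → Connected Λ1 Λ0 β α) ∧
    (∀ α ∈ Λ1, ∀ β ∈ Λ1, ∀ γ ∈ Λ1,
      Connected Λ1 Λ0 α β → Connected Λ1 Λ0 β γ → Connected Λ1 Λ0 α γ) :=
  ⟨fun _ hα => Connected.refl hα,
    fun _ _ _ _ h => h.symm hΛ1sym hΛ0sym,
    fun _ _ _ _ _ _ hαβ hβγ => hαβ.trans hΛ1sym hΛ0sym hβγ⟩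

/-- If `Λ1` and `Λ0` are symmetric, the relation "being connected" is an equivalence
relation on `Λ1`. -/
theorem connected_equivalence
    {K V : Type*} [Field K] [AddCommGroup V] [Module K V]
    (Λ1 Λ0 : Set V)
    (hΛ1ne : ∀ v ∈ Λ1, v ≠ 0) (hΛ0ne : ∀ v ∈ Λ0, v ≠ 0)
    (hΛ1sym : ∀ α ∈ Λ1, -α ∈ Λ1) (hΛ0sym : ∀ α ∈ Λ0, -α ∈ Λ0) :
    (∀ α ∈ Λ1, Connected Λ1 Λ0 α α) ∧
    (∀ α ∈ Λ1, ∀ β ∈ Λ1, Connected Λ1 Λ0 α β → Connected Λ1 Λ0 β α) ∧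
    (∀ α ∈ Λ1, ∀ β ∈ Λ1, ∀ γ ∈ Λ1,
      Connected Λ1 Λ0 α β → Connected Λ1 Λ0 β γ → Connected Λ1 Λ0 α γ) :=
  connected_equivalence_general Λ1 Λ0 hΛ1sym hΛ0sym
end

section
/- Let K be a field, V a K-vector space, and Λ¹, Λ⁰ subsets of V \ {0} that are both symmetric. For α ∈ Λ¹ let Λ¹_α = {β ∈ Λ¹ : α and β are connected}. Then Λ¹_α is a root subsystem of Λ¹: (i) it is symmetric, i.e., β ∈ Λ¹_α implies −β ∈ Λ¹_α; and (ii) whenever β, γ, δ ∈ Λ¹_α ∪ {0} satisfy β+γ ∈ Λ⁰ and β+γ+δ ∈ Λ¹, then β+γ+δ ∈ Λ¹_α. -/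
/-!
A connection ending at `±β` can be prolonged by two more terms `γ, δ` whenever `β + γ ∈ Λ0` and
`β + γ + δ ∈ Λ1`; if it ends at `-β`, prolong it by `-γ, -δ` instead, which symmetry of `Λ1` and
`Λ0` allows. This gives closure of `Λ¹_α`; the case `β = 0` reduces to a connection ending at `γ`.
-/

open Finset

namespace Connected

variable {V : Type*} [AddCommGroup V] {Λ1 Λ0 : Set V} {α β γ δ : V}

theorem neg_right (h : Connected Λ1 Λ0 α β) : Connected Λ1 Λ0 α (-β) := by
  obtain ⟨n, f, h0, hf, hodd, heven, hsum⟩ := h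
  exact ⟨n, f, h0, hf, hodd, heven, by rwa [neg_neg, or_comm]⟩

theorem of_sum_eq_add_add {n : ℕ} {f : ℕ → V} (h0 : f 0 = α)
    (hf : ∀ i < 2 * n + 1, f i ∈ Λ1 ∪ {0})
    (hodd : ∀ i ≤ n, ∑ j ∈ range (2 * i + 1), f j ∈ Λ1)
    (heven : ∀ i, 1 ≤ i → i ≤ n → ∑ j ∈ range (2 * i), f j ∈ Λ0)
    (hsum : ∑ j ∈ range (2 * n + 1), f j = β)
    (hγ : γ ∈ Λ1 ∪ {0}) (hδ : δ ∈ Λ1 ∪ {0}) (hβγ : β + γ ∈ Λ0) (hβγδ : β + γ + δ ∈ Λ1) :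
    Connected Λ1 Λ0 α (β + γ + δ) := by
  set g : ℕ → V := fun i => if i < 2 * n + 1 then f i else if i = 2 * n + 1 then γ else δ
  have hg_lt : ∀ i < 2 * n + 1, g i = f i := fun i hi => if_pos hi
  have hg_γ : g (2 * n + 1) = γ := by simp [g]
  have hg_δ : g (2 * (n + 1)) = δ := by simp only [g]; rw [if_neg (by omega), if_neg (by omega)]
  have hsum_g : ∀ m ≤ 2 * n + 1, ∑ j ∈ range m, g j = ∑ j ∈ range m, f j := fun m hm =>
    sum_congr rfl fun j hj => hg_lt j (by rw [mem_range] at hj; omega)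
  have hβγ_g : ∑ j ∈ range (2 * (n + 1)), g j = β + γ := by
    rw [show 2 * (n + 1) = 2 * n + 1 + 1 by ring, sum_range_succ, hsum_g _ le_rfl, hsum, hg_γ]
  have hβγδ_g : ∑ j ∈ range (2 * (n + 1) + 1), g j = β + γ + δ := by
    rw [sum_range_succ, hβγ_g, hg_δ]
  refine ⟨n + 1, g, by rw [hg_lt 0 (by omega), h0], ?_, ?_, ?_, Or.inl hβγδ_g⟩
  · intro i hi
    obtain hi | rfl | rfl : i < 2 * n + 1 ∨ i = 2 * n + 1 ∨ i = 2 * (n + 1) := by omega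
    · rw [hg_lt i hi]; exact hf i hi
    · rwa [hg_γ]
    · rwa [hg_δ]
  · intro i hi
    obtain hi | rfl : i ≤ n ∨ i = n + 1 := by omega
    · rw [hsum_g _ (by omega)]; exact hodd i hi
    · rwa [hβγδ_g]
  · intro i hi₁ hi₂
    obtain hi | rfl : i ≤ n ∨ i = n + 1 := by omega
    · rw [hsum_g _ (by omega)]; exact heven i hi₁ hi
    · rwa [hβγ_g]

theorem add_add (h : Connected Λ1 Λ0 α β)
    (hΛ1 : ∀ x ∈ Λ1, -x ∈ Λ1) (hΛ0 : ∀ x ∈ Λ0, -x ∈ Λ0)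
    (hγ : γ ∈ Λ1 ∪ {0}) (hδ : δ ∈ Λ1 ∪ {0}) (hβγ : β + γ ∈ Λ0) (hβγδ : β + γ + δ ∈ Λ1) :
    Connected Λ1 Λ0 α (β + γ + δ) := by
  have neg_mem : ∀ x ∈ Λ1 ∪ {0}, -x ∈ Λ1 ∪ {0} := by
    rintro x (hx | rfl)
    exacts [Or.inl (hΛ1 x hx), Or.inr neg_zero]
  obtain ⟨n, f, h0, hf, hodd, heven, hsum | hsum⟩ := h
  · exact of_sum_eq_add_add h0 hf hodd heven hsum hγ hδ hβγ hβγδ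
  · have hneg := of_sum_eq_add_add h0 hf hodd heven hsum (neg_mem γ hγ) (neg_mem δ hδ)
      (by rw [← neg_add]; exact hΛ0 _ hβγ) (by rw [← neg_add, ← neg_add]; exact hΛ1 _ hβγδ)
    simpa only [← neg_add, neg_neg] using hneg.neg_right

end Connected

theorem connected_component_is_root_subsystem_general
    {V : Type*} [AddCommGroup V]
    (Λ1 Λ0 : Set V)
    (hΛ0ne : ∀ v ∈ Λ0, v ≠ 0)
    (hΛ1sym : ∀ α ∈ Λ1, -α ∈ Λ1) (hΛ0sym : ∀ α ∈ Λ0, -α ∈ Λ0)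
    (α : V)
    (Λα : Set V) (hΛα : Λα = {β ∈ Λ1 | Connected Λ1 Λ0 α β}) :
    (∀ β ∈ Λα, -β ∈ Λα) ∧
    (∀ β γ δ : V, β ∈ Λα ∪ {0} → γ ∈ Λα ∪ {0} → δ ∈ Λα ∪ {0} →
      β + γ ∈ Λ0 → β + γ + δ ∈ Λ1 → β + γ + δ ∈ Λα) := by
  subst hΛα
  have mem_union_zero : {β ∈ Λ1 | Connected Λ1 Λ0 α β} ∪ {0} ⊆ Λ1 ∪ {0} :=
    Set.union_subset_union_left _ (Set.sep_subset _ _)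
  refine ⟨fun β ⟨hβ, hαβ⟩ => ⟨hΛ1sym β hβ, hαβ.neg_right⟩, ?_⟩
  rintro β γ δ (hβ | rfl) hγ hδ hβγ hβγδ
  · exact ⟨hβγδ, hβ.2.add_add hΛ1sym hΛ0sym (mem_union_zero hγ) (mem_union_zero hδ) hβγ hβγδ⟩
  rcases hγ with hγ | rfl
  · rw [zero_add] at hβγ hβγδ ⊢
    have hγδ := hγ.2.add_add hΛ1sym hΛ0sym (Or.inr rfl) (mem_union_zero hδ)
      (by rwa [add_zero]) (by rwa [add_zero])
    exact ⟨hβγδ, by rwa [add_zero] at hγδ⟩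
  · exact absurd (add_zero (0 : V)) (hΛ0ne _ hβγ)

/-- If `Λ1` and `Λ0` are symmetric, then for each root `α ∈ Λ1` the set
`Λ¹_α = {β ∈ Λ1 : α and β are connected}` is a root subsystem of `Λ1`. -/
theorem connected_component_is_root_subsystem
    {K V : Type*} [Field K] [AddCommGroup V] [Module K V]
    (Λ1 Λ0 : Set V)
    (hΛ1ne : ∀ v ∈ Λ1, v ≠ 0) (hΛ0ne : ∀ v ∈ Λ0, v ≠ 0)
    (hΛ1sym : ∀ α ∈ Λ1, -α ∈ Λ1) (hΛ0sym : ∀ α ∈ Λ0, -α ∈ Λ0)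
    (α : V) (hα : α ∈ Λ1)
    (Λα : Set V) (hΛα : Λα = {β ∈ Λ1 | Connected Λ1 Λ0 α β}) :
    (∀ β ∈ Λα, -β ∈ Λα) ∧
    (∀ β γ δ : V, β ∈ Λα ∪ {0} → γ ∈ Λα ∪ {0} → δ ∈ Λα ∪ {0} →
      β + γ ∈ Λ0 → β + γ + δ ∈ Λ1 → β + γ + δ ∈ Λα) :=
  connected_component_is_root_subsystem_general Λ1 Λ0 hΛ0ne hΛ1sym hΛ0sym α Λα hΛα
end
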